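/- In any stochastic game with a reachability objective, for every ε > 0 there exists a strategy π for the minimizing player Diamond such that for every vertex v and every strategy σ of player Box, P_v^{σ,π}(Reach(T)) ≤ val(v) + ε. Moreover, if the game is finitely branching, there is a memoryless deterministic strategy π for player Diamond that is optimal minimizing in every vertex simultaneously. -/
import Mathlib


open scoped Classical

/-- A stochastic game: a directed graph with a total edge relation, vertices
partitioned among player Box, player Diamond and probabilistic vertices,
the latter carrying a positive probability distribution on outgoing edges. -/
structure SGame (V : Type*) where
  edge : V → V → Prop
  total : ∀ v, ∃ u, edge v u
  isBox : V → Prop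
  isDiamond : V → Prop
  isCirc : V → Prop
  cover : ∀ v, isBox v ∨ isDiamond v ∨ isCirc v
  disjBD : ∀ v, ¬ (isBox v ∧ isDiamond v)
  disjBC : ∀ v, ¬ (isBox v ∧ isCirc v)
  disjDC : ∀ v, ¬ (isDiamond v ∧ isCirc v)
  prob : V → V → ℝ
  prob_nonneg : ∀ v u, 0 ≤ prob v u
  prob_supp : ∀ v u, isCirc v → (0 < prob v u ↔ edge v u)
  prob_sum : ∀ v, isCirc v → ∑' u, prob v u = 1

/-- A history-dependent randomized strategy for the player owning the vertices
satisfying `own`: it assigns to every history `w` and current vertex `v` owned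
by the player a probability distribution on the outgoing edges of `v`. -/
structure SGame.Strat {V : Type*} (G : SGame V) (own : V → Prop) where
  f : List V → V → V → ℝ
  nonneg : ∀ w v u, 0 ≤ f w v u
  supp : ∀ w v u, own v → f w v u ≠ 0 → G.edge v u
  sum_one : ∀ w v, own v → ∑' u, f w v u = 1

/-- One-step transition probability of the play `G(σ,π)` given history `w`. -/
noncomputable def SGame.step {V : Type*} (G : SGame V) (σ : G.Strat G.isBox)
    (π : G.Strat G.isDiamond) (w : List V) (v u : V) : ℝ :=
  if G.isBox v then σ.f w v u else if G.isDiamond v then π.f w v u else G.prob v u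

/-- Probability of reaching the target set `T` from `v` within at most `n`
transitions in the play `G(σ,π)`, given that history `w` has elapsed. -/
noncomputable def SGame.reachN {V : Type*} (G : SGame V) (σ : G.Strat G.isBox)
    (π : G.Strat G.isDiamond) (T : Set V) : ℕ → List V → V → ℝ
  | 0, _, v => if v ∈ T then 1 else 0
  | n+1, w, v => if v ∈ T then 1 else
      ∑' u, G.step σ π w v u * SGame.reachN G σ π T n (w ++ [v]) u

/-- Probability `P_v^{σ,π}(Reach(T))` of reaching `T` from `v` in the play `G(σ,π)`. -/
noncomputable def SGame.reachP {V : Type*} (G : SGame V) (σ : G.Strat G.isBox)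
    (π : G.Strat G.isDiamond) (T : Set V) (v : V) : ℝ :=
  ⨆ n, G.reachN σ π T n [] v

/-- The (lower) value `sup_σ inf_π P_v^{σ,π}(Reach(T))` of vertex `v`. -/
noncomputable def SGame.val {V : Type*} (G : SGame V) (T : Set V) (v : V) : ℝ :=
  ⨆ σ : G.Strat G.isBox, ⨅ π : G.Strat G.isDiamond, G.reachP σ π T v

/-- The Bellman operator on functions `V → [0,1]`. -/
noncomputable def SGame.bellman {V : Type*} (G : SGame V) (T : Set V)
    (f : V → ℝ) : V → ℝ := fun v =>
  if v ∈ T then 1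
  else if G.isBox v then sSup (f '' {u | G.edge v u})
  else if G.isDiamond v then sInf (f '' {u | G.edge v u})
  else ∑' u, G.prob v u * f u


namespace SGame

variable {V : Type*} (G : SGame V)

/-- A default (memoryless deterministic) strategy. -/
noncomputable def dflt (own : V → Prop) : G.Strat own where
  f := fun _ v u => if u = (G.total v).choose then 1 else 0
  nonneg := by intro w v u; split <;> norm_num
  supp := by
    intro w v u _ h
    have : u = (G.total v).choose := by by_contra h'; exact h (if_neg h')
    subst this; exact (G.total v).choose_spec
  sum_one := fun w v _ => tsum_ite_eq _ 1

instance (own : V → Prop) : Nonempty (G.Strat own) := ⟨G.dflt own⟩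

variable (σ : G.Strat G.isBox) (π : G.Strat G.isDiamond) (T : Set V)

lemma Strat.summable {own : V → Prop} (s : G.Strat own) (w : List V) {v : V} (hv : own v) :
    Summable (s.f w v) := by
  by_contra h
  have h2 := tsum_eq_zero_of_not_summable h
  rw [s.sum_one w v hv] at h2
  exact one_ne_zero h2

lemma summable_prob {v : V} (hv : G.isCirc v) : Summable (G.prob v) := by
  by_contra h
  have h2 := tsum_eq_zero_of_not_summable h
  rw [G.prob_sum v hv] at h2
  exact one_ne_zero h2

lemma step_nonneg (w : List V) (v u : V) : 0 ≤ G.step σ π w v u := by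
  unfold SGame.step; split
  · exact σ.nonneg _ _ _
  split
  · exact π.nonneg _ _ _
  · exact G.prob_nonneg _ _

lemma step_box {v : V} (hv : G.isBox v) (w : List V) (u : V) :
    G.step σ π w v u = σ.f w v u := by simp [SGame.step, hv]

lemma step_diamond {v : V} (hv : G.isDiamond v) (w : List V) (u : V) :
    G.step σ π w v u = π.f w v u := by
  have hb : ¬ G.isBox v := fun h => G.disjBD v ⟨h, hv⟩
  simp [SGame.step, hb, hv]

lemma step_circ {v : V} (hv : G.isCirc v) (w : List V) (u : V) :
    G.step σ π w v u = G.prob v u := by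
  have hb : ¬ G.isBox v := fun h => G.disjBC v ⟨h, hv⟩
  have hd : ¬ G.isDiamond v := fun h => G.disjDC v ⟨h, hv⟩
  simp [SGame.step, hb, hd]

lemma tsum_step (w : List V) (v : V) : ∑' u, G.step σ π w v u = 1 := by
  rcases G.cover v with hv | hv | hv
  · simp only [G.step_box σ π hv]; exact σ.sum_one w v hv
  · simp only [G.step_diamond σ π hv]; exact π.sum_one w v hv
  · simp only [G.step_circ σ π hv]; exact G.prob_sum v hv

lemma summable_step (w : List V) (v : V) : Summable (G.step σ π w v) := by
  by_contra h
  have h2 := tsum_eq_zero_of_not_summable h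
  rw [G.tsum_step σ π w v] at h2
  exact one_ne_zero h2

lemma summable_mul_of_le_one {p g : V → ℝ} (hp : ∀ u, 0 ≤ p u) (hps : Summable p)
    (hg0 : ∀ u, 0 ≤ g u) (hg1 : ∀ u, g u ≤ 1) : Summable fun u => p u * g u :=
  Summable.of_nonneg_of_le (fun u => mul_nonneg (hp u) (hg0 u))
    (fun u => mul_le_of_le_one_right (hp u) (hg1 u)) hps

lemma reachN_nonneg : ∀ (n : ℕ) (w : List V) (v : V), 0 ≤ G.reachN σ π T n w v := by
  intro n
  induction n with
  | zero => intro w v; rw [SGame.reachN]; split <;> norm_num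
  | succ n ih =>
    intro w v; rw [SGame.reachN]; split
    · norm_num
    · exact tsum_nonneg fun u => mul_nonneg (G.step_nonneg σ π w v u) (ih _ u)

lemma reachN_le_one : ∀ (n : ℕ) (w : List V) (v : V), G.reachN σ π T n w v ≤ 1 := by
  intro n
  induction n with
  | zero => intro w v; rw [SGame.reachN]; split <;> norm_num
  | succ n ih =>
    intro w v; rw [SGame.reachN]; split
    · norm_num
    calc ∑' u, G.step σ π w v u * G.reachN σ π T n (w ++ [v]) u
        ≤ ∑' u, G.step σ π w v u := by
          refine Summable.tsum_le_tsum (fun u => ?_)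
            (summable_mul_of_le_one (G.step_nonneg σ π w v) (G.summable_step σ π w v)
              (fun u => G.reachN_nonneg σ π T n _ u) (fun u => ih _ u))
            (G.summable_step σ π w v)
          exact mul_le_of_le_one_right (G.step_nonneg σ π w v u) (ih _ u)
      _ = 1 := G.tsum_step σ π w v

lemma summable_step_mul (n : ℕ) (w : List V) (v : V) :
    Summable fun u => G.step σ π w v u * G.reachN σ π T n (w ++ [v]) u :=
  summable_mul_of_le_one (G.step_nonneg σ π w v) (G.summable_step σ π w v)
    (fun u => G.reachN_nonneg σ π T n _ u) (fun u => G.reachN_le_one σ π T n _ u)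

lemma reachN_mono : ∀ (n : ℕ) (w : List V) (v : V),
    G.reachN σ π T n w v ≤ G.reachN σ π T (n + 1) w v := by
  intro n
  induction n with
  | zero =>
    intro w v
    rw [SGame.reachN, SGame.reachN]
    by_cases hv : v ∈ T
    · simp [hv]
    · simp only [if_neg hv]
      exact tsum_nonneg fun u => mul_nonneg (G.step_nonneg σ π w v u)
        (G.reachN_nonneg σ π T 0 _ u)
  | succ n ih =>
    intro w v
    rw [SGame.reachN, SGame.reachN]
    by_cases hv : v ∈ T
    · simp [hv]
    · simp only [if_neg hv]
      exact Summable.tsum_le_tsum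
        (fun u => mul_le_mul_of_nonneg_left (ih _ u) (G.step_nonneg σ π w v u))
        (G.summable_step_mul σ π T n w v) (G.summable_step_mul σ π T (n+1) w v)

lemma reachN_monotone (v : V) : Monotone fun n => G.reachN σ π T n [] v :=
  monotone_nat_of_le_succ fun n => G.reachN_mono σ π T n [] v

lemma reachN_le_reachP (n : ℕ) (v : V) : G.reachN σ π T n [] v ≤ G.reachP σ π T v :=
  le_ciSup (f := fun n => G.reachN σ π T n [] v)
    ⟨1, by rintro x ⟨m, rfl⟩; exact G.reachN_le_one σ π T m [] v⟩ n

lemma reachP_nonneg (v : V) : 0 ≤ G.reachP σ π T v :=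
  le_trans (G.reachN_nonneg σ π T 0 [] v) (G.reachN_le_reachP σ π T 0 v)

lemma reachP_le_one (v : V) : G.reachP σ π T v ≤ 1 :=
  ciSup_le fun n => G.reachN_le_one σ π T n [] v

lemma reachN_of_mem {v : V} (hv : v ∈ T) (n : ℕ) (w : List V) :
    G.reachN σ π T n w v = 1 := by
  cases n <;> (rw [SGame.reachN]; rw [if_pos hv])

lemma reachP_of_mem {v : V} (hv : v ∈ T) : G.reachP σ π T v = 1 := by
  have h : (fun n => G.reachN σ π T n [] v) = fun _ => (1 : ℝ) :=
    funext fun n => G.reachN_of_mem σ π T hv n []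
  rw [SGame.reachP, h, ciSup_const]

lemma bddBelow_reachP (σ : G.Strat G.isBox) (v : V) :
    BddBelow (Set.range fun π : G.Strat G.isDiamond => G.reachP σ π T v) :=
  ⟨0, by rintro x ⟨π, rfl⟩; exact G.reachP_nonneg σ π T v⟩

lemma bddAbove_val (v : V) :
    BddAbove (Set.range fun σ : G.Strat G.isBox =>
      ⨅ π : G.Strat G.isDiamond, G.reachP σ π T v) := by
  refine ⟨1, ?_⟩
  rintro x ⟨σ, rfl⟩
  exact ciInf_le_of_le (G.bddBelow_reachP T σ v) (Classical.arbitrary _)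
    (G.reachP_le_one σ _ T v)

lemma val_nonneg (v : V) : 0 ≤ G.val T v :=
  Real.iSup_nonneg fun σ => Real.iInf_nonneg fun π => G.reachP_nonneg σ π T v

lemma val_le_one (v : V) : G.val T v ≤ 1 :=
  ciSup_le fun σ => ciInf_le_of_le (G.bddBelow_reachP T σ v) (Classical.arbitrary _)
    (G.reachP_le_one σ _ T v)

lemma iInf_le_val (σ : G.Strat G.isBox) (v : V) :
    (⨅ π : G.Strat G.isDiamond, G.reachP σ π T v) ≤ G.val T v :=
  le_ciSup (G.bddAbove_val T v) σ

lemma val_of_mem {v : V} (hv : v ∈ T) : G.val T v = 1 := by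
  refine le_antisymm (G.val_le_one T v) ?_
  refine le_trans ?_ (G.iInf_le_val T (G.dflt G.isBox) v)
  exact le_ciInf fun π => (G.reachP_of_mem _ π T hv).ge

/-- Shift of a strategy by a fixed history prefix. -/
def Strat.shift {own : V → Prop} (s : G.Strat own) (w0 : List V) : G.Strat own where
  f := fun w v u => s.f (w0 ++ w) v u
  nonneg := fun w v u => s.nonneg _ v u
  supp := fun w v u h h' => s.supp _ v u h h'
  sum_one := fun w v h => s.sum_one _ v h

lemma reachN_congr (σ₁ σ₂ : G.Strat G.isBox) (π₁ π₂ : G.Strat G.isDiamond) :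
    ∀ (n : ℕ) (w₁ w₂ : List V) (v : V),
      σ₁.f w₁ v = σ₂.f w₂ v → π₁.f w₁ v = π₂.f w₂ v →
      (∀ t x, σ₁.f (w₁ ++ v :: t) x = σ₂.f (w₂ ++ v :: t) x) →
      (∀ t x, π₁.f (w₁ ++ v :: t) x = π₂.f (w₂ ++ v :: t) x) →
      G.reachN σ₁ π₁ T n w₁ v = G.reachN σ₂ π₂ T n w₂ v := by
  intro n
  induction n with
  | zero => intro w₁ w₂ v _ _ _ _; rw [SGame.reachN, SGame.reachN]
  | succ n ih =>
    intro w₁ w₂ v hσ0 hπ0 hσ hπ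
    rw [SGame.reachN, SGame.reachN]
    by_cases hv : v ∈ T
    · rw [if_pos hv, if_pos hv]
    rw [if_neg hv, if_neg hv]
    refine tsum_congr fun u => ?_
    have hst : G.step σ₁ π₁ w₁ v u = G.step σ₂ π₂ w₂ v u := by
      unfold SGame.step; rw [hσ0, hπ0]
    rw [hst]
    congr 1
    refine ih (w₁ ++ [v]) (w₂ ++ [v]) u ?_ ?_ ?_ ?_
    · have := hσ [] u; simpa using this
    · have := hπ [] u; simpa using this
    · intro t x; have := hσ (u :: t) x; simpa [List.append_assoc] using this
    · intro t x; have := hπ (u :: t) x; simpa [List.append_assoc] using this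

/-- Combination of a family of Box strategies, dispatching on the second
element of the history (histories of plays started at `v` and one step later
at `u` have the form `v :: u :: rest`). -/
def combo (σs : V → G.Strat G.isBox) : G.Strat G.isBox where
  f := fun w x u => (σs (w.tail.headD x)).f w.tail x u
  nonneg := fun w v u => (σs _).nonneg _ v u
  supp := fun w v u h h' => (σs _).supp _ v u h h'
  sum_one := fun w v h => (σs _).sum_one _ v h

/-- Monotone-convergence style bound for `tsum`. -/
lemma tsum_sup_le {p : V → ℝ} {g : ℕ → V → ℝ} (hp : ∀ u, 0 ≤ p u) (hps : Summable p)
    (hg0 : ∀ n u, 0 ≤ g n u) (hg1 : ∀ n u, g n u ≤ 1) (hmono : ∀ u, Monotone fun n => g n u)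
    {S : ℝ} (hS : ∀ n, ∑' u, p u * g n u ≤ S) :
    ∑' u, p u * (⨆ n, g n u) ≤ S := by
  have hgs1 : ∀ u, (⨆ n, g n u) ≤ 1 := fun u => ciSup_le fun n => hg1 n u
  have hgs0 : ∀ u, 0 ≤ (⨆ n, g n u) := fun u => Real.iSup_nonneg fun n => hg0 n u
  have hsum : Summable fun u => p u * (⨆ n, g n u) :=
    summable_mul_of_le_one hp hps hgs0 hgs1
  refine Summable.tsum_le_of_sum_le hsum fun F => ?_
  have ht : Filter.Tendsto (fun n => ∑ u ∈ F, p u * g n u) Filter.atTop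
      (nhds (∑ u ∈ F, p u * (⨆ n, g n u))) := by
    refine tendsto_finset_sum F fun u _ => ?_
    exact (tendsto_atTop_ciSup (hmono u)
      ⟨1, by rintro x ⟨n, rfl⟩; exact hg1 n u⟩).const_mul (p u)
  refine le_of_tendsto ht (Filter.Eventually.of_forall fun n => ?_)
  calc ∑ u ∈ F, p u * g n u
      ≤ ∑' u, p u * g n u := Summable.sum_le_tsum F (fun u _ => mul_nonneg (hp u) (hg0 n u))
        (summable_mul_of_le_one hp hps (hg0 n) (hg1 n))
    _ ≤ S := hS n

/-- Gluing: from `v`, Box moves to `u` and thereafter mimics `σ'`. -/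
noncomputable def glue (σ' : G.Strat G.isBox) {v u : V} (hu : G.edge v u) : G.Strat G.isBox where
  f := fun w x u' =>
    if w = [] ∧ x = v then (if u' = u then 1 else 0) else σ'.f w.tail x u'
  nonneg := by
    intro w x u'; split
    · split <;> norm_num
    · exact σ'.nonneg _ _ _
  supp := by
    intro w x u' hx h; split at h
    · next hc =>
        rcases hc with ⟨-, rfl⟩
        have : u' = u := by by_contra h'; exact h (if_neg h')
        subst this; exact hu
    · exact σ'.supp _ _ _ hx h
  sum_one := by
    intro w x hx
    by_cases hc : w = [] ∧ x = v
    · simp only [if_pos hc]; exact tsum_ite_eq u 1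
    · simp only [if_neg hc]; exact σ'.sum_one _ x hx

lemma val_box_le {v u : V} (hv : G.isBox v) (hu : G.edge v u) :
    G.val T u ≤ G.val T v := by
  by_cases hvT : v ∈ T
  · rw [G.val_of_mem T hvT]; exact G.val_le_one T u
  have main : ∀ σ' : G.Strat G.isBox,
      (⨅ π : G.Strat G.isDiamond, G.reachP σ' π T u) ≤ G.val T v := by
    intro σ'
    set gl : G.Strat G.isBox := G.glue σ' hu with hgl
    have key : ∀ π : G.Strat G.isDiamond,
        G.reachP σ' (Strat.shift G π [v]) T u ≤ G.reachP gl π T v := by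
      intro π
      refine ciSup_le fun n => ?_
      have heq : G.reachN gl π T (n+1) [] v
          = G.reachN σ' (Strat.shift G π [v]) T n [] u := by
        rw [SGame.reachN, if_neg hvT]
        have hstep : ∀ x, G.step gl π [] v x = gl.f [] v x := fun x =>
          G.step_box gl π hv [] x
        simp only [hstep, List.nil_append]
        have hz : ∀ b, b ≠ u → gl.f [] v b * G.reachN gl π T n [v] b = 0 := by
          intro b hb
          have hb0 : gl.f [] v b = 0 := by
            show (if ([] : List V) = [] ∧ v = v then (if b = u then 1 else 0)
              else σ'.f [] v b) = 0
            rw [if_pos ⟨rfl, rfl⟩, if_neg hb]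
          rw [hb0, zero_mul]
        rw [tsum_eq_single u hz]
        have h1 : gl.f [] v u = 1 := by
          show (if ([] : List V) = [] ∧ v = v then (if u = u then 1 else 0)
            else σ'.f [] v u) = 1
          rw [if_pos ⟨rfl, rfl⟩, if_pos rfl]
        rw [h1, one_mul]
        refine G.reachN_congr T gl σ' π (Strat.shift G π [v]) n [v] [] u ?_ ?_ ?_ ?_
        · funext u'
          show (if ([v] : List V) = [] ∧ u = v then (if u' = u then 1 else 0)
            else σ'.f [v].tail u u') = σ'.f [] u u'
          rw [if_neg (by simp)]
          rfl
        · rfl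
        · intro t x
          funext u'
          show (if (v :: u :: t : List V) = [] ∧ x = v then (if u' = u then 1 else 0)
            else σ'.f (v :: u :: t).tail x u') = σ'.f ([] ++ u :: t) x u'
          rw [if_neg (by simp)]
          rfl
        · intro t x; rfl
      calc G.reachN σ' (Strat.shift G π [v]) T n [] u
          = G.reachN gl π T (n+1) [] v := heq.symm
        _ ≤ G.reachP gl π T v := G.reachN_le_reachP gl π T (n+1) v
    calc (⨅ π : G.Strat G.isDiamond, G.reachP σ' π T u)
        ≤ ⨅ π : G.Strat G.isDiamond, G.reachP gl π T v :=
          le_ciInf fun π => ciInf_le_of_le (G.bddBelow_reachP T σ' u)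
            (Strat.shift G π [v]) (key π)
      _ ≤ G.val T v := G.iInf_le_val T gl v
  show (⨆ σ' : G.Strat G.isBox, ⨅ π : G.Strat G.isDiamond, G.reachP σ' π T u) ≤ G.val T v
  exact ciSup_le main

lemma val_diamond_succ {v : V} (hv : G.isDiamond v) {δ : ℝ} (hδ : 0 < δ) :
    ∃ u, G.edge v u ∧ G.val T u ≤ G.val T v + δ := by
  by_cases hvT : v ∈ T
  · obtain ⟨u, hu⟩ := G.total v
    exact ⟨u, hu, by rw [G.val_of_mem T hvT]; linarith [G.val_le_one T u]⟩
  by_contra hcon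
  push_neg at hcon
  have hcon' : ∀ u, G.edge v u → G.val T v + δ < G.val T u := hcon
  have hex : ∀ u, ∃ σ' : G.Strat G.isBox, G.edge v u →
      G.val T v + δ < ⨅ π : G.Strat G.isDiamond, G.reachP σ' π T u := by
    intro u
    by_cases hu : G.edge v u
    · obtain ⟨σ', hσ'⟩ := exists_lt_of_lt_ciSup
        (show G.val T v + δ < ⨆ σ' : G.Strat G.isBox,
          ⨅ π : G.Strat G.isDiamond, G.reachP σ' π T u from hcon' u hu)
      exact ⟨σ', fun _ => hσ'⟩
    · exact ⟨Classical.arbitrary _, fun h => absurd h hu⟩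
  choose σs hσs using hex
  set C := G.combo σs with hC
  have key : ∀ π : G.Strat G.isDiamond, G.val T v + δ ≤ G.reachP C π T v := by
    intro π
    set π₂ := Strat.shift G π [v] with hπ₂
    have h1 : ∀ (n : ℕ) (u : V),
        G.reachN C π T n [v] u = G.reachN (σs u) π₂ T n [] u := by
      intro n u
      exact G.reachN_congr T C (σs u) π π₂ n [v] [] u rfl rfl
        (fun t x => rfl) (fun t x => rfl)
    have h2 : ∀ n : ℕ, G.reachN C π T (n+1) [] v
        = ∑' u, π.f [] v u * G.reachN (σs u) π₂ T n [] u := by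
      intro n
      rw [SGame.reachN, if_neg hvT]
      refine tsum_congr fun u => ?_
      rw [G.step_diamond C π hv, List.nil_append, h1]
    have h3 : ∀ n : ℕ, (∑' u, π.f [] v u * G.reachN (σs u) π₂ T n [] u)
        ≤ G.reachP C π T v :=
      fun n => (h2 n) ▸ G.reachN_le_reachP C π T (n+1) v
    have h4 : (∑' u, π.f [] v u * (⨆ n, G.reachN (σs u) π₂ T n [] u))
        ≤ G.reachP C π T v :=
      tsum_sup_le (π.nonneg [] v) (Strat.summable G π [] hv)
        (fun n u => G.reachN_nonneg (σs u) π₂ T n [] u)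
        (fun n u => G.reachN_le_one (σs u) π₂ T n [] u)
        (fun u => G.reachN_monotone (σs u) π₂ T u) h3
    have hR : ∀ u, (⨆ n, G.reachN (σs u) π₂ T n [] u) = G.reachP (σs u) π₂ T u :=
      fun u => rfl
    have h5 : ∀ u, π.f [] v u ≠ 0 →
        G.val T v + δ ≤ ⨆ n, G.reachN (σs u) π₂ T n [] u := by
      intro u hu0
      have hedge := π.supp [] v u hv hu0
      have h6 : (⨅ π' : G.Strat G.isDiamond, G.reachP (σs u) π' T u)
          ≤ G.reachP (σs u) π₂ T u := ciInf_le (G.bddBelow_reachP T (σs u) u) π₂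
      rw [hR u]
      exact le_of_lt (lt_of_lt_of_le (hσs u hedge) h6)
    calc G.val T v + δ = ∑' u, π.f [] v u * (G.val T v + δ) := by
          rw [tsum_mul_right, π.sum_one [] v hv, one_mul]
      _ ≤ ∑' u, π.f [] v u * (⨆ n, G.reachN (σs u) π₂ T n [] u) := by
          refine Summable.tsum_le_tsum (fun u => ?_)
            (Summable.mul_right _ (Strat.summable G π [] hv))
            (summable_mul_of_le_one (π.nonneg [] v) (Strat.summable G π [] hv)
              (fun u => Real.iSup_nonneg fun n => G.reachN_nonneg (σs u) π₂ T n [] u)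
              (fun u => ciSup_le fun n => G.reachN_le_one (σs u) π₂ T n [] u))
          by_cases hu0 : π.f [] v u = 0
          · simp [hu0]
          · exact mul_le_mul_of_nonneg_left (h5 u hu0) (π.nonneg [] v u)
      _ ≤ G.reachP C π T v := h4
  have h7 : G.val T v + δ ≤ G.val T v :=
    le_trans (le_ciInf key) (G.iInf_le_val T C v)
  linarith

lemma circ_val_le {v : V} (hv : G.isCirc v) :
    (∑' u, G.prob v u * G.val T u) ≤ G.val T v := by
  have hps := G.summable_prob hv
  have hsum_pval : Summable fun u => G.prob v u * G.val T u :=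
    summable_mul_of_le_one (G.prob_nonneg v) hps
      (fun u => G.val_nonneg T u) (fun u => G.val_le_one T u)
  by_cases hvT : v ∈ T
  · calc (∑' u, G.prob v u * G.val T u) ≤ ∑' u, G.prob v u :=
        Summable.tsum_le_tsum (fun u => mul_le_of_le_one_right (G.prob_nonneg v u)
          (G.val_le_one T u)) hsum_pval hps
      _ = 1 := G.prob_sum v hv
      _ = G.val T v := (G.val_of_mem T hvT).symm
  refine le_of_forall_pos_le_add fun δ hδ => ?_
  have hex : ∀ u, ∃ σ' : G.Strat G.isBox,
      G.val T u - δ < ⨅ π : G.Strat G.isDiamond, G.reachP σ' π T u := by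
    intro u
    exact exists_lt_of_lt_ciSup
      (show G.val T u - δ < ⨆ σ' : G.Strat G.isBox,
        ⨅ π : G.Strat G.isDiamond, G.reachP σ' π T u from sub_lt_self _ hδ)
  choose σs hσs using hex
  set C := G.combo σs with hC
  have key : ∀ π : G.Strat G.isDiamond,
      (∑' u, G.prob v u * G.val T u) - δ ≤ G.reachP C π T v := by
    intro π
    set π₂ := Strat.shift G π [v] with hπ₂
    have h1 : ∀ (n : ℕ) (u : V),
        G.reachN C π T n [v] u = G.reachN (σs u) π₂ T n [] u := by
      intro n u
      exact G.reachN_congr T C (σs u) π π₂ n [v] [] u rfl rfl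
        (fun t x => rfl) (fun t x => rfl)
    have h2 : ∀ n : ℕ, G.reachN C π T (n+1) [] v
        = ∑' u, G.prob v u * G.reachN (σs u) π₂ T n [] u := by
      intro n
      rw [SGame.reachN, if_neg hvT]
      refine tsum_congr fun u => ?_
      rw [G.step_circ C π hv, List.nil_append, h1]
    have h3 : ∀ n : ℕ, (∑' u, G.prob v u * G.reachN (σs u) π₂ T n [] u)
        ≤ G.reachP C π T v :=
      fun n => (h2 n) ▸ G.reachN_le_reachP C π T (n+1) v
    have h4 : (∑' u, G.prob v u * (⨆ n, G.reachN (σs u) π₂ T n [] u))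
        ≤ G.reachP C π T v :=
      tsum_sup_le (G.prob_nonneg v) hps
        (fun n u => G.reachN_nonneg (σs u) π₂ T n [] u)
        (fun n u => G.reachN_le_one (σs u) π₂ T n [] u)
        (fun u => G.reachN_monotone (σs u) π₂ T u) h3
    have hR : ∀ u, (⨆ n, G.reachN (σs u) π₂ T n [] u) = G.reachP (σs u) π₂ T u :=
      fun u => rfl
    have e1 : (fun u => G.prob v u * (G.val T u - δ))
        = fun u => G.prob v u * G.val T u - G.prob v u * δ :=
      funext fun u => mul_sub _ _ _
    calc (∑' u, G.prob v u * G.val T u) - δ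
        = ∑' u, G.prob v u * (G.val T u - δ) := by
          rw [e1, Summable.tsum_sub hsum_pval (Summable.mul_right δ hps), tsum_mul_right,
            G.prob_sum v hv, one_mul]
      _ ≤ ∑' u, G.prob v u * (⨆ n, G.reachN (σs u) π₂ T n [] u) := by
          refine Summable.tsum_le_tsum (fun u => ?_) (by rw [e1]; exact
              (Summable.sub hsum_pval (Summable.mul_right δ hps)))
            (summable_mul_of_le_one (G.prob_nonneg v) hps
              (fun u => Real.iSup_nonneg fun n => G.reachN_nonneg (σs u) π₂ T n [] u)
              (fun u => ciSup_le fun n => G.reachN_le_one (σs u) π₂ T n [] u))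
          refine mul_le_mul_of_nonneg_left ?_ (G.prob_nonneg v u)
          rw [hR u]
          exact le_of_lt (lt_of_lt_of_le (hσs u)
            (ciInf_le (G.bddBelow_reachP T (σs u) u) π₂))
      _ ≤ G.reachP C π T v := h4
  have h7 : (∑' u, G.prob v u * G.val T u) - δ ≤ G.val T v :=
    le_trans (le_ciInf key) (G.iInf_le_val T C v)
  linarith

lemma key_bound {ε : ℝ} (hε : 0 ≤ ε) (π : G.Strat G.isDiamond)
    (hπ : ∀ (w : List V) (v : V), G.isDiamond v → ∃ u, π.f w v u = 1 ∧
        (∀ u', u' ≠ u → π.f w v u' = 0) ∧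
        G.val T u ≤ G.val T v + ε / 2 ^ (w.length + 1)) :
    ∀ (n : ℕ) (w : List V) (v : V) (σ : G.Strat G.isBox),
      G.reachN σ π T n w v ≤ G.val T v + ε / 2 ^ w.length := by
  have hpow : ∀ L : ℕ, (0:ℝ) ≤ ε / 2 ^ L := fun L => div_nonneg hε (by positivity)
  have hhalf : ∀ L : ℕ, ε / 2 ^ (L + 1) + ε / 2 ^ (L + 1) = ε / 2 ^ L := by
    intro L
    rw [pow_succ]
    have h2 : (2:ℝ) ^ L ≠ 0 := by positivity
    field_simp
    ring
  have hle : ∀ L : ℕ, ε / 2 ^ (L + 1) ≤ ε / 2 ^ L := by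
    intro L
    have := hhalf L
    have := hpow (L + 1)
    linarith
  intro n
  induction n with
  | zero =>
    intro w v σ
    rw [SGame.reachN]
    by_cases hvT : v ∈ T
    · rw [if_pos hvT, G.val_of_mem T hvT]
      linarith [hpow w.length]
    · rw [if_neg hvT]
      have := G.val_nonneg T v
      linarith [hpow w.length]
  | succ n ih =>
    intro w v σ
    rw [SGame.reachN]
    by_cases hvT : v ∈ T
    · rw [if_pos hvT, G.val_of_mem T hvT]
      linarith [hpow w.length]
    rw [if_neg hvT]
    have hlen : (w ++ [v]).length = w.length + 1 := by simp
    have ih' : ∀ u, G.reachN σ π T n (w ++ [v]) u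
        ≤ G.val T u + ε / 2 ^ (w.length + 1) := by
      intro u
      have := ih (w ++ [v]) u σ
      rwa [hlen] at this
    set c : ℝ := ε / 2 ^ (w.length + 1) with hc
    have hcl : (0:ℝ) ≤ c := hpow _
    have hub0 : ∀ u : V, 0 ≤ G.val T u + c := fun u => add_nonneg (G.val_nonneg T u) hcl
    have hub1 : ∀ u : V, G.val T u + c ≤ 1 + c := fun u => by
      linarith [G.val_le_one T u]
    rcases G.cover v with hv | hv | hv
    · -- Box
      have hstep : ∀ u, G.step σ π w v u = σ.f w v u := fun u => G.step_box σ π hv w u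
      have hsf := Strat.summable G σ w hv
      have S2 : Summable fun u => σ.f w v u * (G.val T u + c) :=
        Summable.of_nonneg_of_le (fun u => mul_nonneg (σ.nonneg w v u) (hub0 u))
          (fun u => mul_le_mul_of_nonneg_left (hub1 u) (σ.nonneg w v u))
          (hsf.mul_right (1 + c))
      calc (∑' u, G.step σ π w v u * G.reachN σ π T n (w ++ [v]) u)
          = ∑' u, σ.f w v u * G.reachN σ π T n (w ++ [v]) u := by
            exact tsum_congr fun u => by rw [hstep]
        _ ≤ ∑' u, σ.f w v u * (G.val T u + c) := by
            refine Summable.tsum_le_tsum (fun u => mul_le_mul_of_nonneg_left (ih' u)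
                (σ.nonneg w v u)) ?_ S2
            have := G.summable_step_mul σ π T n w v
            exact this.congr fun u => by rw [hstep]
        _ ≤ ∑' u, σ.f w v u * (G.val T v + c) := by
            refine Summable.tsum_le_tsum (fun u => ?_) S2
              (Summable.mul_right _ hsf)
            by_cases hz : σ.f w v u = 0
            · simp [hz]
            · refine mul_le_mul_of_nonneg_left ?_ (σ.nonneg w v u)
              have hedge := σ.supp w v u hv hz
              have := G.val_box_le T hv hedge
              linarith
        _ = G.val T v + c := by
            rw [tsum_mul_right, σ.sum_one w v hv, one_mul]
        _ ≤ G.val T v + ε / 2 ^ w.length := by rw [hc]; linarith [hle w.length]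
    · -- Diamond
      obtain ⟨u₀, h1, h0, hval⟩ := hπ w v hv
      have hstep : ∀ u, G.step σ π w v u = π.f w v u := fun u => G.step_diamond σ π hv w u
      have hz : ∀ b, b ≠ u₀ → G.step σ π w v b * G.reachN σ π T n (w ++ [v]) b = 0 := by
        intro b hb
        rw [hstep b, h0 b hb, zero_mul]
      rw [tsum_eq_single u₀ hz, hstep u₀, h1, one_mul]
      have hi := ih' u₀
      have h2 := hhalf w.length
      linarith [hc.le, hc.ge]
    · -- Circ
      have hstep : ∀ u, G.step σ π w v u = G.prob v u := fun u => G.step_circ σ π hv w u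
      have hps := G.summable_prob hv
      have hsum_pval : Summable fun u => G.prob v u * G.val T u :=
        summable_mul_of_le_one (G.prob_nonneg v) hps
          (fun u => G.val_nonneg T u) (fun u => G.val_le_one T u)
      have S2 : Summable fun u => G.prob v u * (G.val T u + c) :=
        Summable.of_nonneg_of_le (fun u => mul_nonneg (G.prob_nonneg v u) (hub0 u))
          (fun u => mul_le_mul_of_nonneg_left (hub1 u) (G.prob_nonneg v u))
          (hps.mul_right (1 + c))
      calc (∑' u, G.step σ π w v u * G.reachN σ π T n (w ++ [v]) u)
          = ∑' u, G.prob v u * G.reachN σ π T n (w ++ [v]) u := by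
            exact tsum_congr fun u => by rw [hstep]
        _ ≤ ∑' u, G.prob v u * (G.val T u + c) := by
            refine Summable.tsum_le_tsum (fun u => mul_le_mul_of_nonneg_left (ih' u)
                (G.prob_nonneg v u)) ?_ S2
            have := G.summable_step_mul σ π T n w v
            exact this.congr fun u => by rw [hstep]
        _ = (∑' u, G.prob v u * G.val T u) + c := by
            have e1 : (fun u => G.prob v u * (G.val T u + c))
                = fun u => G.prob v u * G.val T u + G.prob v u * c :=
              funext fun u => mul_add _ _ _
            rw [e1, Summable.tsum_add hsum_pval (Summable.mul_right c hps), tsum_mul_right,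
              G.prob_sum v hv, one_mul]
        _ ≤ G.val T v + c := by
            have := G.circ_val_le T hv
            linarith
        _ ≤ G.val T v + ε / 2 ^ w.length := by rw [hc]; linarith [hle w.length]


end SGame


/-- For every `ε > 0` player Diamond has a single strategy that is ε-optimal
minimizing in every vertex; moreover, in a finitely-branching game player
Diamond has a memoryless deterministic strategy that is optimal minimizing in
every vertex simultaneously. -/
theorem diamond_eps_optimal_and_MD_optimal {V : Type*} (G : SGame V) (T : Set V) :
    (∀ ε : ℝ, 0 < ε → ∃ π : G.Strat G.isDiamond,
        ∀ (v : V) (σ : G.Strat G.isBox), G.reachP σ π T v ≤ G.val T v + ε) ∧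
    ((∀ v, {u | G.edge v u}.Finite) →
      ∃ π : G.Strat G.isDiamond,
        ((∀ w w' v, π.f w v = π.f w' v) ∧
          (∀ w v, G.isDiamond v → ∃ u, π.f w v u = 1)) ∧
        ∀ (v : V) (σ : G.Strat G.isBox), G.reachP σ π T v ≤ G.val T v) := by
  constructor
  · -- ε-optimal part
    intro ε hε
    have hch : ∀ (w : List V) (v : V), ∃ u, G.edge v u ∧
        (G.isDiamond v → G.val T u ≤ G.val T v + ε / 2 ^ (w.length + 1)) := by
      intro w v
      by_cases hv : G.isDiamond v
      · obtain ⟨u, hu, hval⟩ := G.val_diamond_succ T hv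
          (δ := ε / 2 ^ (w.length + 1)) (by positivity)
        exact ⟨u, hu, fun _ => hval⟩
      · obtain ⟨u, hu⟩ := G.total v
        exact ⟨u, hu, fun h => absurd h hv⟩
    choose uc hedge hval using hch
    let π₀ : G.Strat G.isDiamond := {
      f := fun w v u => if u = uc w v then 1 else 0
      nonneg := by intro w v u; split <;> norm_num
      supp := by
        intro w v u _ h
        have : u = uc w v := by by_contra h'; exact h (if_neg h')
        subst this; exact hedge w v
      sum_one := fun w v _ => tsum_ite_eq _ 1 }
    refine ⟨π₀, fun v σ => ?_⟩
    have hp : ∀ (w : List V) (v : V), G.isDiamond v →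
        ∃ u, π₀.f w v u = 1 ∧
          (∀ u', u' ≠ u → π₀.f w v u' = 0) ∧
          G.val T u ≤ G.val T v + ε / 2 ^ (w.length + 1) := by
      intro w v hv
      exact ⟨uc w v, if_pos rfl, fun u' hu' => if_neg hu', hval w v hv⟩
    have hkey := G.key_bound T hε.le π₀ hp
    calc G.reachP σ π₀ T v ≤ G.val T v + ε / 2 ^ (List.length ([] : List V)) :=
        ciSup_le fun n => hkey n [] v σ
      _ = G.val T v + ε := by norm_num
  · -- MD part
    intro hfin
    have hch : ∀ v : V, ∃ u, G.edge v u ∧ (G.isDiamond v → G.val T u ≤ G.val T v) := by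
      intro v
      by_cases hv : G.isDiamond v
      · obtain ⟨u, hu, hmin⟩ := Set.exists_min_image {u | G.edge v u} (G.val T)
          (hfin v) (G.total v)
        refine ⟨u, hu, fun _ => le_of_forall_pos_le_add fun δ hδ => ?_⟩
        obtain ⟨u', hu', hval⟩ := G.val_diamond_succ T hv hδ
        exact le_trans (hmin u' hu') hval
      · obtain ⟨u, hu⟩ := G.total v
        exact ⟨u, hu, fun h => absurd h hv⟩
    choose uc hedge hval using hch
    let π₀ : G.Strat G.isDiamond := {
      f := fun _ v u => if u = uc v then 1 else 0
      nonneg := by intro w v u; split <;> norm_num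
      supp := by
        intro w v u _ h
        have : u = uc v := by by_contra h'; exact h (if_neg h')
        subst this; exact hedge v
      sum_one := fun w v _ => tsum_ite_eq _ 1 }
    refine ⟨π₀,
      ⟨fun w w' v => rfl, fun w v _ => ⟨uc v, if_pos rfl⟩⟩, fun v σ => ?_⟩
    have hp : ∀ (w : List V) (v : V), G.isDiamond v →
        ∃ u, π₀.f w v u = 1 ∧
          (∀ u', u' ≠ u → π₀.f w v u' = 0) ∧
          G.val T u ≤ G.val T v + (0:ℝ) / 2 ^ (w.length + 1) := by
      intro w v hv
      refine ⟨uc v, if_pos rfl, fun u' hu' => if_neg hu', ?_⟩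
      simpa using hval v hv
    have hkey := G.key_bound T le_rfl π₀ hp
    refine ciSup_le fun n => ?_
    have := hkey n [] v σ
    simpa using this
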